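/- arXiv:1708.08817 — 3 statements merged into one kernel-verified Lean document; each statement's English description precedes it below -/
import Mathlib

section
/- If G is a bipartite graph with parts A and B such that for every subset S of A with |S| ≤ k and every subset T of A with |T| ≤ k disjoint from S, there exists a vertex in B adjacent to all of S and none of T, and |A| ≥ 2k, then |B| ≥ 2^k. -/
/-!
Pick `W ⊆ A` with `#W = k`. For every `X ⊆ W`, separating `X` from `W \ X` yields a vertex of `B`
whose neighbourhood meets `W` in exactly `X`, so the neighbourhoods of the vertices of `B` shatter
`W`, and a family shattering `W` has at least `2 ^ #W` members.
-/

open Finset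

namespace Finset

lemma Shatters.two_pow_card_le {α : Type*} [DecidableEq α] {𝒜 : Finset (Finset α)}
    {s : Finset α} (h : 𝒜.Shatters s) : 2 ^ #s ≤ #𝒜 :=
  calc 2 ^ #s = #s.powerset := (card_powerset s).symm
    _ = #(𝒜.image (s ∩ ·)) := by rw [shatters_iff.1 h]
    _ ≤ #𝒜 := card_image_le

end Finset

namespace SimpleGraph

variable {V : Type*} (G : SimpleGraph V)

def IsSeparating (A B : Finset V) (s t : ℕ) : Prop :=
  ∀ S ⊆ A, ∀ T ⊆ A, Disjoint S T → #S ≤ s → #T ≤ t →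
    ∃ v ∈ B, (∀ x ∈ S, G.Adj v x) ∧ (∀ y ∈ T, ¬ G.Adj v y)

variable {G} [DecidableEq V]

open Classical in
lemma IsSeparating.shatters {A B W : Finset V} {s t : ℕ} (hG : G.IsSeparating A B s t)
    (hWA : W ⊆ A) (hWs : #W ≤ s) (hWt : #W ≤ t) :
    (B.image fun v ↦ {x ∈ A | G.Adj v x}).Shatters W := by
  intro X hXW
  obtain ⟨v, hvB, hadj, hnadj⟩ := hG X (hXW.trans hWA) (W \ X) (sdiff_subset.trans hWA)
    disjoint_sdiff ((card_le_card hXW).trans hWs) ((card_le_card sdiff_subset).trans hWt)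
  refine ⟨_, mem_image_of_mem _ hvB, ?_⟩
  ext x
  simp only [mem_inter, mem_filter]
  constructor
  · rintro ⟨hxW, -, hvx⟩
    by_contra hxX
    exact hnadj x (mem_sdiff.2 ⟨hxW, hxX⟩) hvx
  · intro hxX
    exact ⟨hXW hxX, hWA (hXW hxX), hadj x hxX⟩

end SimpleGraph

theorem stmt_0_general {V : Type} [DecidableEq V] (G : SimpleGraph V)
    (k : ℕ) (A B : Finset V) (hA : 2 * k ≤ A.card)
    (hsep : ∀ S ⊆ A, ∀ T ⊆ A, Disjoint S T → S.card ≤ k → T.card ≤ k →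
      ∃ v ∈ B, (∀ x ∈ S, G.Adj v x) ∧ (∀ y ∈ T, ¬ G.Adj v y)) :
    2 ^ k ≤ B.card := by
  obtain ⟨W, hWA, hWk⟩ := exists_subset_card_eq (show k ≤ #A by omega)
  have hshatter := SimpleGraph.IsSeparating.shatters hsep hWA hWk.le hWk.le
  exact hWk ▸ hshatter.two_pow_card_le.trans card_image_le

/-- If G is a bipartite graph with parts A and B that is (k,k)-separating
for A, and |A| ≥ 2k, then |B| ≥ 2^k. -/
theorem stmt_0 {V : Type} [Fintype V] [DecidableEq V] (G : SimpleGraph V)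
    (k : ℕ) (A B : Finset V) (hAB : Disjoint A B) (hA : 2 * k ≤ A.card)
    (hsep : ∀ S ⊆ A, ∀ T ⊆ A, Disjoint S T → S.card ≤ k → T.card ≤ k →
      ∃ v ∈ B, (∀ x ∈ S, G.Adj v x) ∧ (∀ y ∈ T, ¬ G.Adj v y)) :
    2 ^ k ≤ B.card :=
  stmt_0_general G k A B hA hsep
end

section
/- Let G be a bipartite graph with parts A, B with |A| ≥ 2k, and let μ be a probability measure on A. If G is (k,0)-separating for A (every subset of A of size at most k has a common neighbour in B) and μ(N(x)) < ε for each x ∈ B, then |B| > 1/ε^k. -/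
/-!
Weight each `k`-tuple `t` of elements of `A` by `∏ i, μ (t i)`; the total weight is
`μ(A)^k = 1`. By separation every tuple has a common neighbour `x ∈ B`, and the tuples with all
entries in `N(x)` carry total weight `μ(N(x))^k < ε^k`. A union bound over `B` gives
`1 < |B| ε^k`.
-/

open Finset Fintype

theorem Finset.sum_le_sum_sum_filter_of_forall_exists {ι κ M : Type*} [AddCommMonoid M]
    [PartialOrder M] [IsOrderedAddMonoid M] {s : Finset ι} {t : Finset κ} {f : ι → M}
    (r : κ → ι → Prop) [∀ x, DecidablePred (r x)] (hf : ∀ i ∈ s, 0 ≤ f i)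
    (hcover : ∀ i ∈ s, ∃ x ∈ t, r x i) :
    ∑ i ∈ s, f i ≤ ∑ x ∈ t, ∑ i ∈ s with r x i, f i := by
  simp_rw [sum_filter]
  rw [sum_comm]
  refine sum_le_sum fun i hi => ?_
  obtain ⟨x, hx, hrx⟩ := hcover i hi
  calc f i = if r x i then f i else 0 := (if_pos hrx).symm
    _ ≤ ∑ y ∈ t, if r y i then f i else 0 :=
      single_le_sum (f := fun y => if r y i then f i else 0)
        (fun y _ => by split_ifs <;> simp [hf i hi]) hx

theorem Finset.sum_piFinset_filter_forall_prod {α R : Type*} [CommSemiring R] (s : Finset α)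
    (p : α → Prop) [DecidablePred p] (f : α → R) (k : ℕ) :
    ∑ t ∈ piFinset (fun _ : Fin k => s) with ∀ i, p (t i), ∏ i, f (t i)
      = (∑ a ∈ s with p a, f a) ^ k := by
  have : {t ∈ piFinset (fun _ : Fin k => s) | ∀ i, p (t i)} = piFinset fun _ => s.filter p := by
    ext t
    simp [forall_and]
  rw [this, sum_pow']

theorem one_le_sum_pow_of_forall_tuple_exists {α β : Type*} (r : β → α → Prop)
    [∀ x, DecidablePred (r x)] {A : Finset α} {B : Finset β} {μ : α → ℝ}
    (hμ0 : ∀ a ∈ A, 0 ≤ μ a) (hμ1 : ∑ a ∈ A, μ a = 1) (k : ℕ)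
    (hsep : ∀ t : Fin k → α, (∀ i, t i ∈ A) → ∃ x ∈ B, ∀ i, r x (t i)) :
    1 ≤ ∑ x ∈ B, (∑ a ∈ A with r x a, μ a) ^ k := by
  calc (1 : ℝ) = (∑ a ∈ A, μ a) ^ k := by rw [hμ1, one_pow]
    _ = ∑ t ∈ piFinset (fun _ : Fin k => A), ∏ i, μ (t i) := sum_pow' A μ k
    _ ≤ ∑ x ∈ B, ∑ t ∈ piFinset (fun _ : Fin k => A) with ∀ i, r x (t i), ∏ i, μ (t i) := by
      apply sum_le_sum_sum_filter_of_forall_exists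
      · exact fun t ht => prod_nonneg fun i _ => hμ0 _ (mem_piFinset.1 ht i)
      · exact fun t ht => hsep t (mem_piFinset.1 ht)
    _ = ∑ x ∈ B, (∑ a ∈ A with r x a, μ a) ^ k := by
      simp_rw [sum_piFinset_filter_forall_prod]

theorem stmt_1_general {V : Type} (G : SimpleGraph V)
    [DecidableRel G.Adj] (k : ℕ) (hk : 0 < k) (A B : Finset V)
    (ε : ℝ) (hε : 0 < ε)
    (μ : V → ℝ) (hμ0 : ∀ v, 0 ≤ μ v) (hμ1 : ∑ v ∈ A, μ v = 1)
    (hsep : ∀ S ⊆ A, S.card ≤ k → ∃ v ∈ B, ∀ x ∈ S, G.Adj v x)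
    (hnbr : ∀ x ∈ B, ∑ y ∈ A.filter (fun y => G.Adj x y), μ y < ε) :
    (1 : ℝ) / ε ^ k < B.card := by
  classical
  have hsep_tuple : ∀ t : Fin k → V, (∀ i, t i ∈ A) → ∃ x ∈ B, ∀ i, G.Adj x (t i) := by
    intro t ht
    obtain ⟨x, hx, hadj⟩ := hsep (univ.image t) (image_subset_iff.2 fun i _ => ht i)
      (card_image_le.trans (Finset.card_fin k).le)
    exact ⟨x, hx, fun i => hadj _ (mem_image_of_mem t (mem_univ i))⟩
  have key := one_le_sum_pow_of_forall_tuple_exists G.Adj (fun a _ => hμ0 a) hμ1 k hsep_tuple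
  have hB : B.Nonempty := nonempty_iff_ne_empty.2 (by rintro rfl; norm_num at key)
  have hlt : ∑ x ∈ B, (∑ y ∈ A with G.Adj x y, μ y) ^ k < ∑ _x ∈ B, ε ^ k :=
    sum_lt_sum_of_nonempty hB fun x hx =>
      pow_lt_pow_left₀ (hnbr x hx) (sum_nonneg fun y _ => hμ0 y) hk.ne'
  rw [sum_const, nsmul_eq_mul] at hlt
  rw [div_lt_iff₀ (pow_pos hε k)]
  linarith

/-- If the bipartite graph G = (A,B) with |A| ≥ 2k is (k,0)-separating for A,
μ is a probability measure on A, and μ(N(x)) < ε for each x ∈ B, then |B| > 1/ε^k. -/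
theorem stmt_1 {V : Type} [Fintype V] [DecidableEq V] (G : SimpleGraph V)
    [DecidableRel G.Adj] (k : ℕ) (hk : 0 < k) (A B : Finset V) (hAB : Disjoint A B)
    (hA : 2 * k ≤ A.card) (ε : ℝ) (hε : 0 < ε)
    (μ : V → ℝ) (hμ0 : ∀ v, 0 ≤ μ v) (hμ1 : ∑ v ∈ A, μ v = 1)
    (hsep : ∀ S ⊆ A, S.card ≤ k → ∃ v ∈ B, ∀ x ∈ S, G.Adj v x)
    (hnbr : ∀ x ∈ B, ∑ y ∈ A.filter (fun y => G.Adj x y), μ y < ε) :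
    (1 : ℝ) / ε ^ k < B.card :=
  stmt_1_general G k hk A B ε hε μ hμ0 hμ1 hsep hnbr
end

section
/- Let G be a bipartite graph with parts A, B which is (k,0)-separating for A, and let μ be the covering measure on B (obtained by sampling X₁,...,X_k i.i.d. uniform from A and then choosing uniformly a vertex of B whose neighbourhood contains all X_i). If B' ⊆ B has μ(B') > ε for some ε > 0, then |⋃_{x ∈ B'} N(x)| ≥ (1 − (1/k)·log(1/ε))·|A|. -/
/-!
If the covering vertex chosen for `X₁, …, X_k` lies in `B'`, then every `Xᵢ` is adjacent to it and
so lies in `U = ⋃_{x ∈ B'} N(x)`. Hence `μ(B') ≤ (|U| / |A|)^k`, so `μ(B') > ε` forces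
`|U| ≥ ε^{1/k} |A|`, and `ε^{1/k} = exp(-(1/k) log(1/ε)) ≥ 1 - (1/k) log(1/ε)`.
-/

open Finset

section Covering

variable {V : Type*} [DecidableEq V] (G : SimpleGraph V) [DecidableRel G.Adj] (A B' : Finset V)

lemma card_inter_div_card_le_prod_indicator {ι : Type*} [Fintype ι] (f : ι → A) {S : Finset V}
    (hS : ∀ v ∈ S, ∀ i, G.Adj v (f i)) :
    ((S ∩ B').card : ℝ) / S.card
      ≤ ∏ i, if (f i : V) ∈ B'.biUnion (fun x => A.filter fun a => G.Adj x a) then 1 else 0 := by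
  by_cases hf : ∀ i, (f i : V) ∈ B'.biUnion (fun x => A.filter fun a => G.Adj x a)
  · simp only [hf, if_true, prod_const_one]
    exact div_le_one_of_le₀ (by exact_mod_cast card_le_card inter_subset_left) (by positivity)
  · push Not at hf
    obtain ⟨i, hi⟩ := hf
    have hempty : S ∩ B' = ∅ := by
      refine eq_empty_of_forall_notMem fun v hv => hi ?_
      rw [mem_inter] at hv
      exact mem_biUnion.mpr ⟨v, hv.2, mem_filter.mpr ⟨(f i).2, hS v hv.1 i⟩⟩
    rw [hempty, card_empty, Nat.cast_zero, zero_div]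
    exact prod_nonneg fun j _ => by positivity

lemma sum_prod_indicator_eq_card_pow {ι : Type*} [Fintype ι] [DecidableEq ι] {U : Finset V}
    (hU : U ⊆ A) :
    ∑ f : ι → A, ∏ i, (if (f i : V) ∈ U then 1 else 0 : ℝ) = (U.card : ℝ) ^ Fintype.card ι := by
  have hsum : ∑ a : A, (if (a : V) ∈ U then 1 else 0 : ℝ) = U.card := by
    rw [sum_coe_sort A fun a => if a ∈ U then (1 : ℝ) else 0, sum_boole, filter_mem_eq_inter,
      inter_eq_right.mpr hU]
  rw [← Fintype.prod_sum fun _ (a : A) => if (a : V) ∈ U then (1 : ℝ) else 0, hsum, prod_const,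
    card_univ]

lemma sum_card_filter_adj_inter_div_le (B : Finset V) (k : ℕ) :
    ∑ f : Fin k → A, (((B.filter fun v => ∀ i, G.Adj v (f i)) ∩ B').card : ℝ)
        / ((B.filter fun v => ∀ i, G.Adj v (f i)).card : ℝ)
      ≤ ((B'.biUnion fun x => A.filter fun a => G.Adj x a).card : ℝ) ^ k := by
  have hU : (B'.biUnion fun x => A.filter fun a => G.Adj x a) ⊆ A :=
    biUnion_subset.mpr fun _ _ => filter_subset _ _
  refine (sum_le_sum fun f _ => card_inter_div_card_le_prod_indicator G A B' f
    fun _ hv => (mem_filter.mp hv).2).trans_eq ?_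
  rw [sum_prod_indicator_eq_card_pow A hU, Fintype.card_fin]

end Covering

lemma Real.one_sub_mul_log_inv_le_rpow {ε : ℝ} (hε : 0 < ε) (t : ℝ) :
    1 - t * Real.log ε⁻¹ ≤ ε ^ t := by
  rw [Real.rpow_def_of_pos hε, Real.log_inv]
  linarith [Real.add_one_le_exp (Real.log ε * t)]

lemma Real.rpow_inv_natCast_mul_le_of_mul_pow_le {ε a u : ℝ} {k : ℕ} (hk : k ≠ 0) (hε : 0 ≤ ε)
    (hu : 0 ≤ u) (h : ε * a ^ k ≤ u ^ k) : ε ^ (k⁻¹ : ℝ) * a ≤ u :=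
  le_of_pow_le_pow_left₀ hk hu <| by rwa [mul_pow, Real.rpow_inv_natCast_pow hε hk]

theorem stmt_4_general {V : Type} [DecidableEq V] (G : SimpleGraph V)
    [DecidableRel G.Adj] (k : ℕ) (hk : 0 < k) (A B : Finset V)
    (B' : Finset V) (ε : ℝ) (hε : 0 < ε)
    (hμ : ε < (∑ f : Fin k → {x // x ∈ A},
        (((B.filter (fun v => ∀ i, G.Adj v (f i))) ∩ B').card : ℝ)
          / ((B.filter (fun v => ∀ i, G.Adj v (f i))).card : ℝ)) / (A.card : ℝ) ^ k) :
    (1 - (1 / (k : ℝ)) * Real.log ε⁻¹) * A.card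
      ≤ ((B'.biUnion (fun x => A.filter (fun a => G.Adj x a))).card : ℝ) := by
  have hpow : ε * (A.card : ℝ) ^ k
      ≤ ((B'.biUnion fun x => A.filter fun a => G.Adj x a).card : ℝ) ^ k := by
    refine le_trans ?_ (sum_card_filter_adj_inter_div_le G A B' B k)
    exact mul_le_of_le_div₀ (by positivity) (by positivity) hμ.le
  calc (1 - (1 / (k : ℝ)) * Real.log ε⁻¹) * A.card
      ≤ ε ^ (k⁻¹ : ℝ) * A.card := by
        rw [one_div]
        exact mul_le_mul_of_nonneg_right (Real.one_sub_mul_log_inv_le_rpow hε _) (by positivity)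
    _ ≤ _ := Real.rpow_inv_natCast_mul_le_of_mul_pow_le hk.ne' hε.le (by positivity) hpow

/-- Let G = (A,B) be (k,0)-separating for A and let μ be the covering
measure on B (sample X₁,...,X_k i.i.d. uniform from A, then pick uniformly a vertex of B
whose neighbourhood contains all the Xᵢ).  If B' ⊆ B has μ(B') > ε, then
|⋃_{x ∈ B'} N(x)| ≥ (1 − (1/k)·log(1/ε))·|A|. -/
theorem stmt_4 {V : Type} [Fintype V] [DecidableEq V] (G : SimpleGraph V)
    [DecidableRel G.Adj] (k : ℕ) (hk : 0 < k) (A B : Finset V) (hAB : Disjoint A B)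
    (hA : A.Nonempty)
    (hsep : ∀ S ⊆ A, S.card ≤ k → ∃ v ∈ B, ∀ x ∈ S, G.Adj v x)
    (B' : Finset V) (hB' : B' ⊆ B) (ε : ℝ) (hε : 0 < ε)
    (hμ : ε < (∑ f : Fin k → {x // x ∈ A},
        (((B.filter (fun v => ∀ i, G.Adj v (f i))) ∩ B').card : ℝ)
          / ((B.filter (fun v => ∀ i, G.Adj v (f i))).card : ℝ)) / (A.card : ℝ) ^ k) :
    (1 - (1 / (k : ℝ)) * Real.log ε⁻¹) * A.card
      ≤ ((B'.biUnion (fun x => A.filter (fun a => G.Adj x a))).card : ℝ) :=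
  stmt_4_general G k hk A B B' ε hε hμ
end
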